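/- arXiv:math/0603123 — 3 statements merged into one kernel-verified Lean document; each statement's English description precedes it below -/
import Mathlib

section
/- In the bipartite ranking problem, the Bayes ranking risk satisfies L* = E[min{η(X)(1−η(X')), η(X')(1−η(X))}] = E[min{η(X), η(X')}] − (E[η(X)])². -/
open MeasureTheory

/-- The ranking risk `L(r) = P{Z · r(X,X') < 0}` of a ranking rule `r`,
where `(X,Y)` and `(X',Y')` are independent with common law `μ` and `Z = (Y - Y')/2`. -/
noncomputable def rankRisk {𝒳 : Type*} [MeasurableSpace 𝒳]
    (μ : Measure (𝒳 × ℝ)) (r : 𝒳 → 𝒳 → ℝ) : ℝ :=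
  ((μ.prod μ) {p : (𝒳 × ℝ) × (𝒳 × ℝ) | (p.1.2 - p.2.2) / 2 * r p.1.1 p.2.1 < 0}).toReal

/-- A ranking rule is a measurable function `𝒳 × 𝒳 → {-1, 1}`. -/
def IsRankingRule {𝒳 : Type*} [MeasurableSpace 𝒳] (r : 𝒳 → 𝒳 → ℝ) : Prop :=
  Measurable (fun p : 𝒳 × 𝒳 => r p.1 p.2) ∧ ∀ x x', r x x' = 1 ∨ r x x' = -1

/-- The Bayes ranking risk `L* = inf_r L(r)`, the infimum of the ranking risk
over all ranking rules. -/
noncomputable def bayesRankRisk {𝒳 : Type*} [MeasurableSpace 𝒳]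
    (μ : Measure (𝒳 × ℝ)) : ℝ :=
  sInf {l : ℝ | ∃ r : 𝒳 → 𝒳 → ℝ, IsRankingRule r ∧ l = rankRisk μ r}

/-!
Since `Y = ±1` almost surely, `μ` is the sum of its restrictions to `{Y = 1}` and `{Y = -1}`,
whose `X`-marginals have densities `η` and `1 - η` with respect to `ν`. Expanding `μ ⊗ μ`
accordingly, the risk of a ranking rule `r` is
`∫_{r < 0} η(x)(1 - η(x')) + ∫_{r > 0} η(x')(1 - η(x))` over `ν ⊗ ν`. This is at least the
integral of the pointwise minimum of the two integrands, with equality for the rule that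
answers `-1` exactly when `η(x) ≤ η(x')`. The second formula follows from
`min (a(1 - b)) (b(1 - a)) = min a b - ab` and Fubini.
-/

open Set
open scoped ENNReal

namespace MeasureTheory.Measure

variable {α β : Type*} [MeasurableSpace α] [MeasurableSpace β]

/-- The measure `B ↦ μ {X ∈ B, Y = y}`, for `(X, Y)` distributed according to `μ`. -/
noncomputable def classMeasure (μ : Measure (α × β)) (y : β) : Measure α :=
  (μ.restrict (Prod.snd ⁻¹' {y})).map Prod.fst

lemma classMeasure_eq_withDensity {μ : Measure (α × β)} [IsFiniteMeasure μ] {ν : Measure α}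
    {y : β} {f : α → ℝ} (hfi : Integrable f ν) (hf0 : 0 ≤ᵐ[ν] f)
    (h : ∀ B, MeasurableSet B → (μ {p | p.1 ∈ B ∧ p.2 = y}).toReal = ∫ x in B, f x ∂ν) :
    μ.classMeasure y = ν.withDensity (fun x => ENNReal.ofReal (f x)) := by
  ext B hB
  rw [classMeasure, map_apply measurable_fst hB, restrict_apply (measurable_fst hB),
    withDensity_apply _ hB,
    ← ofReal_integral_eq_lintegral_ofReal hfi.integrableOn (ae_restrict_of_ae hf0), ← h B hB,
    ENNReal.ofReal_toReal (measure_ne_top _ _)]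
  rfl

lemma eq_withDensity_one_sub_of_add_eq {ν m : Measure α} [IsFiniteMeasure ν] {f : α → ℝ}
    (hf : Measurable f) (hf01 : ∀ x, 0 ≤ f x ∧ f x ≤ 1)
    (h : ν = ν.withDensity (fun x => ENNReal.ofReal (f x)) + m) :
    m = ν.withDensity (fun x => ENNReal.ofReal (1 - f x)) := by
  have hsplit : ν = ν.withDensity (fun x => ENNReal.ofReal (f x))
      + ν.withDensity (fun x => ENNReal.ofReal (1 - f x)) := by
    rw [← withDensity_add_left hf.ennreal_ofReal]
    conv_lhs => rw [← withDensity_one (μ := ν)]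
    congr 1
    funext x
    rw [Pi.add_apply, ← ENNReal.ofReal_add (hf01 x).1 (sub_nonneg.2 (hf01 x).2)]
    simp
  have hle : ν.withDensity (fun x => ENNReal.ofReal (f x)) ≤ ν := by
    conv_rhs => rw [h]
    exact Measure.le_add_right le_rfl
  ext B hB
  have hνB := congrArg (· B) (h.symm.trans hsplit)
  simp only [add_apply] at hνB
  exact (ENNReal.add_right_inj (ne_top_of_le_ne_top (measure_ne_top ν B) (le_iff'.1 hle B))).1 hνB

lemma restrict_label_add_restrict {μ : Measure (α × ℝ)}
    (hY : μ {p : α × ℝ | p.2 ≠ 1 ∧ p.2 ≠ -1} = 0) :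
    μ = μ.restrict (Prod.snd ⁻¹' {1}) + μ.restrict (Prod.snd ⁻¹' {-1}) := by
  have hdisj : Disjoint (Prod.snd ⁻¹' {(1 : ℝ)} : Set (α × ℝ)) (Prod.snd ⁻¹' {-1}) :=
    disjoint_singleton.2 (by norm_num) |>.preimage _
  rw [← restrict_union hdisj (measurable_snd (measurableSet_singleton _)),
    restrict_eq_self_of_ae_mem]
  rw [ae_iff]
  convert hY using 2
  simp [not_or]

lemma map_fst_eq_classMeasure_add {μ : Measure (α × ℝ)}
    (hY : μ {p : α × ℝ | p.2 ≠ 1 ∧ p.2 ≠ -1} = 0) :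
    μ.map Prod.fst = μ.classMeasure 1 + μ.classMeasure (-1) := by
  conv_lhs => rw [restrict_label_add_restrict hY]
  exact Measure.map_add _ _ measurable_fst

lemma prod_restrict_label_apply {μ : Measure (α × ℝ)} [SFinite μ] {r : α → α → ℝ}
    (hr : Measurable fun w : α × α => r w.1 w.2) (y y' : ℝ) :
    (μ.restrict (Prod.snd ⁻¹' {y})).prod (μ.restrict (Prod.snd ⁻¹' {y'}))
        {p | (p.1.2 - p.2.2) / 2 * r p.1.1 p.2.1 < 0}
      = (μ.classMeasure y).prod (μ.classMeasure y') {w | (y - y') / 2 * r w.1 w.2 < 0} := by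
  have hD : MeasurableSet {w : α × α | (y - y') / 2 * r w.1 w.2 < 0} :=
    measurableSet_lt (measurable_const.mul hr) measurable_const
  have hA : MeasurableSet ((Prod.snd ⁻¹' {y}) ×ˢ (Prod.snd ⁻¹' {y'}) : Set ((α × ℝ) × (α × ℝ))) :=
    (measurable_snd (measurableSet_singleton y)).prod (measurable_snd (measurableSet_singleton y'))
  rw [classMeasure, classMeasure, map_prod_map _ _ measurable_fst measurable_fst,
    map_apply (measurable_fst.prodMap measurable_fst) hD, prod_restrict,
    restrict_apply' hA, restrict_apply' hA]
  congr 1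
  ext ⟨⟨x, t⟩, ⟨x', t'⟩⟩
  simp only [mem_inter_iff, mem_ofPred_eq, mem_prod, mem_preimage, mem_singleton_iff,
    Prod.map_fst, Prod.map_snd]
  constructor <;> rintro ⟨h, rfl, rfl⟩ <;> exact ⟨h, rfl, rfl⟩

lemma measure_rankError_eq {μ : Measure (α × ℝ)} [SFinite μ]
    (hY : μ {p : α × ℝ | p.2 ≠ 1 ∧ p.2 ≠ -1} = 0) {r : α → α → ℝ}
    (hr : Measurable fun w : α × α => r w.1 w.2) :
    (μ.prod μ) {p | (p.1.2 - p.2.2) / 2 * r p.1.1 p.2.1 < 0}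
      = (μ.classMeasure (-1)).prod (μ.classMeasure 1) {w | 0 < r w.1 w.2}
        + (μ.classMeasure 1).prod (μ.classMeasure (-1)) {w | r w.1 w.2 < 0} := by
  conv_lhs => rw [restrict_label_add_restrict hY]
  simp only [add_prod, prod_add, add_apply, prod_restrict_label_apply hr]
  norm_num

end MeasureTheory.Measure

namespace MeasureTheory

variable {α : Type*} [MeasurableSpace α]

lemma lintegral_min_le_setLIntegral_add_setLIntegral_compl {μ : Measure α} {f g : α → ℝ≥0∞}
    {s : Set α} (hs : MeasurableSet s) :
    ∫⁻ x, min (f x) (g x) ∂μ ≤ ∫⁻ x in s, f x ∂μ + ∫⁻ x in sᶜ, g x ∂μ := by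
  rw [← lintegral_add_compl _ hs]
  exact add_le_add (lintegral_mono fun x => min_le_left _ _)
    (lintegral_mono fun x => min_le_right _ _)

lemma setLIntegral_add_setLIntegral_compl_eq_lintegral_min {μ : Measure α} {f g : α → ℝ≥0∞}
    {s : Set α} (hs : MeasurableSet s) (hfg : ∀ x ∈ s, f x ≤ g x) (hgf : ∀ x ∉ s, g x ≤ f x) :
    ∫⁻ x in s, f x ∂μ + ∫⁻ x in sᶜ, g x ∂μ = ∫⁻ x, min (f x) (g x) ∂μ := by
  rw [← lintegral_add_compl (fun x => min (f x) (g x)) hs]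
  congr 1
  · exact setLIntegral_congr_fun hs fun x hx => (min_eq_left (hfg x hx)).symm
  · exact setLIntegral_congr_fun hs.compl fun x hx => (min_eq_right (hgf x hx)).symm

lemma integral_min_mul_one_sub {ν : Measure α} [IsFiniteMeasure ν] {η : α → ℝ}
    (hηm : Measurable η) (hη01 : ∀ x, 0 ≤ η x ∧ η x ≤ 1) :
    ∫ w, min (η w.1 * (1 - η w.2)) (η w.2 * (1 - η w.1)) ∂(ν.prod ν)
      = (∫ w, min (η w.1) (η w.2) ∂(ν.prod ν)) - (∫ x, η x ∂ν) ^ 2 := by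
  have hbound : ∀ a b : α, |min (η a) (η b)| ≤ 1 ∧ |η a * η b| ≤ 1 := fun a b => by
    obtain ⟨ha0, ha1⟩ := hη01 a
    obtain ⟨hb0, hb1⟩ := hη01 b
    rw [abs_of_nonneg (le_min ha0 hb0), abs_of_nonneg (mul_nonneg ha0 hb0)]
    exact ⟨(min_le_left _ _).trans ha1, mul_le_one₀ ha1 hb0 hb1⟩
  have hmin : Integrable (fun w : α × α => min (η w.1) (η w.2)) (ν.prod ν) :=
    .of_bound (by fun_prop) 1 (ae_of_all _ fun w => (hbound w.1 w.2).1)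
  have hmul : Integrable (fun w : α × α => η w.1 * η w.2) (ν.prod ν) :=
    .of_bound (by fun_prop) 1 (ae_of_all _ fun w => (hbound w.1 w.2).2)
  have hpoint : ∀ a b : ℝ, min (a * (1 - b)) (b * (1 - a)) = min a b - a * b := fun a b => by
    rw [mul_one_sub, mul_one_sub, mul_comm b a, min_sub_sub_right]
  simp_rw [hpoint]
  rw [integral_sub hmin hmul, integral_prod_mul, sq]

end MeasureTheory

section Bipartite

variable {𝒳 : Type*}

noncomputable def bayesRankingRule (η : 𝒳 → ℝ) (x x' : 𝒳) : ℝ :=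
  if η x ≤ η x' then -1 else 1

lemma bayesRankingRule_neg_iff {η : 𝒳 → ℝ} {x x' : 𝒳} :
    bayesRankingRule η x x' < 0 ↔ η x ≤ η x' := by
  unfold bayesRankingRule
  split_ifs with h <;> simp [h]

variable [MeasurableSpace 𝒳]

lemma isRankingRule_bayesRankingRule {η : 𝒳 → ℝ} (hη : Measurable η) :
    IsRankingRule (bayesRankingRule η) :=
  ⟨Measurable.ite (measurableSet_le (hη.comp measurable_fst) (hη.comp measurable_snd))
    measurable_const measurable_const, fun x x' => by unfold bayesRankingRule; split_ifs <;> simp⟩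

lemma measure_rankError_eq_setLIntegral {μ : Measure (𝒳 × ℝ)} [SFinite μ]
    (hY : μ {p : 𝒳 × ℝ | p.2 ≠ 1 ∧ p.2 ≠ -1} = 0) {ν : Measure 𝒳} [SFinite ν] {η : 𝒳 → ℝ}
    (hηm : Measurable η) (hη0 : ∀ x, 0 ≤ η x)
    (hpos : μ.classMeasure 1 = ν.withDensity fun x => ENNReal.ofReal (η x))
    (hneg : μ.classMeasure (-1) = ν.withDensity fun x => ENNReal.ofReal (1 - η x))
    {r : 𝒳 → 𝒳 → ℝ} (hr : IsRankingRule r) :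
    (μ.prod μ) {p | (p.1.2 - p.2.2) / 2 * r p.1.1 p.2.1 < 0}
      = ∫⁻ w in {w | r w.1 w.2 < 0}, ENNReal.ofReal (η w.1 * (1 - η w.2)) ∂(ν.prod ν)
        + ∫⁻ w in {w | r w.1 w.2 < 0}ᶜ, ENNReal.ofReal (η w.2 * (1 - η w.1)) ∂(ν.prod ν) := by
  have hC : MeasurableSet {w : 𝒳 × 𝒳 | r w.1 w.2 < 0} := measurableSet_lt hr.1 measurable_const
  have hsupport : {w : 𝒳 × 𝒳 | 0 < r w.1 w.2} = {w | r w.1 w.2 < 0}ᶜ := by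
    ext w
    rcases hr.2 w.1 w.2 with h | h <;> simp [h]
  have hq : Measurable fun x => ENNReal.ofReal (1 - η x) := by fun_prop
  rw [Measure.measure_rankError_eq hY hr.1, hpos, hneg, hsupport,
    prod_withDensity hq hηm.ennreal_ofReal, prod_withDensity hηm.ennreal_ofReal hq,
    withDensity_apply _ hC, withDensity_apply _ hC.compl, add_comm]
  simp only [ENNReal.ofReal_mul (hη0 _), mul_comm]

lemma bayesRankRisk_eq_integral {μ : Measure (𝒳 × ℝ)} [IsFiniteMeasure μ]
    (hY : μ {p : 𝒳 × ℝ | p.2 ≠ 1 ∧ p.2 ≠ -1} = 0) {ν : Measure 𝒳} [IsFiniteMeasure ν]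
    {η : 𝒳 → ℝ} (hηm : Measurable η) (hη01 : ∀ x, 0 ≤ η x ∧ η x ≤ 1)
    (hpos : μ.classMeasure 1 = ν.withDensity fun x => ENNReal.ofReal (η x))
    (hneg : μ.classMeasure (-1) = ν.withDensity fun x => ENNReal.ofReal (1 - η x)) :
    bayesRankRisk μ = ∫ w, min (η w.1 * (1 - η w.2)) (η w.2 * (1 - η w.1)) ∂(ν.prod ν) := by
  have hrisk {r : 𝒳 → 𝒳 → ℝ} (hr : IsRankingRule r) := measure_rankError_eq_setLIntegral hY
    hηm (fun x => (hη01 x).1) hpos hneg hr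
  rw [integral_eq_lintegral_of_nonneg_ae _ (by fun_prop)]
  · refine IsLeast.csInf_eq ⟨⟨_, isRankingRule_bayesRankingRule hηm, ?_⟩, ?_⟩
    · have hcost (a b : ℝ) (hab : a ≤ b) : a * (1 - b) ≤ b * (1 - a) := by linarith
      rw [rankRisk, hrisk (isRankingRule_bayesRankingRule hηm),
        setLIntegral_add_setLIntegral_compl_eq_lintegral_min
          (measurableSet_lt (isRankingRule_bayesRankingRule hηm).1 measurable_const)]
      · simp only [ENNReal.ofReal_min]
      · exact fun w hw => ENNReal.ofReal_le_ofReal (hcost _ _ (bayesRankingRule_neg_iff.1 hw))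
      · exact fun w hw => ENNReal.ofReal_le_ofReal
          (hcost _ _ (not_le.1 (bayesRankingRule_neg_iff.not.1 hw)).le)
    · rintro _ ⟨r, hr, rfl⟩
      refine ENNReal.toReal_mono (measure_ne_top _ _) ?_
      rw [hrisk hr]
      simpa only [ENNReal.ofReal_min] using
        lintegral_min_le_setLIntegral_add_setLIntegral_compl
          (measurableSet_lt hr.1 measurable_const)
  · refine ae_of_all _ fun w => le_min ?_ ?_ <;>
      exact mul_nonneg (hη01 _).1 (sub_nonneg.2 (hη01 _).2)

end Bipartite

/-- In the bipartite ranking problem, the Bayes ranking risk satisfies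
`L* = E[min{η(X)(1-η(X')), η(X')(1-η(X))}] = E[min{η(X), η(X')}] - (E[η(X)])²`. -/
theorem stmt1 {𝒳 : Type*} [MeasurableSpace 𝒳]
    (μ : Measure (𝒳 × ℝ)) [IsProbabilityMeasure μ]
    -- bipartite problem: the label `Y` takes values in `{-1, 1}` almost surely
    (hY : μ {p : 𝒳 × ℝ | p.2 ≠ 1 ∧ p.2 ≠ -1} = 0)
    (ν : Measure 𝒳) (hν : ν = μ.map Prod.fst)
    (η : 𝒳 → ℝ) (hηm : Measurable η) (hη01 : ∀ x, 0 ≤ η x ∧ η x ≤ 1)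
    -- `η` is a version of the conditional probability `P{Y = 1 | X = x}`:
    (hcond : ∀ B : Set 𝒳, MeasurableSet B →
      (μ {p : 𝒳 × ℝ | p.1 ∈ B ∧ p.2 = 1}).toReal = ∫ x in B, η x ∂ν) :
    bayesRankRisk μ
        = ∫ w, min (η w.1 * (1 - η w.2)) (η w.2 * (1 - η w.1)) ∂(ν.prod ν) ∧
    bayesRankRisk μ
        = (∫ w, min (η w.1) (η w.2) ∂(ν.prod ν)) - (∫ x, η x ∂ν) ^ 2 := by
  have : IsProbabilityMeasure ν := hν ▸ Measure.isProbabilityMeasure_map measurable_fst.aemeasurable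
  have hηi : Integrable η ν := .of_bound hηm.aestronglyMeasurable 1 (ae_of_all _ fun x => by
    rw [Real.norm_eq_abs, abs_le]
    constructor <;> linarith [hη01 x])
  have hpos : μ.classMeasure 1 = ν.withDensity fun x => ENNReal.ofReal (η x) :=
    Measure.classMeasure_eq_withDensity hηi (ae_of_all _ fun x => (hη01 x).1) hcond
  have hneg : μ.classMeasure (-1) = ν.withDensity fun x => ENNReal.ofReal (1 - η x) :=
    Measure.eq_withDensity_one_sub_of_add_eq hηm hη01
      (by rw [← hpos, hν, Measure.map_fst_eq_classMeasure_add hY])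
  have hbayes := bayesRankRisk_eq_integral hY hηm hη01 hpos hneg
  exact ⟨hbayes, hbayes.trans (integral_min_mul_one_sub hηm hη01)⟩
end

section
/- In the noise-free regression model Y = m(X) for some measurable function m : 𝒳 → ℝ, one has L* = 0, q_r(x,x') = 1{(m(x) − m(x'))·r(x,x') < 0}, and for every ranking rule r, Var(h_r(X,Y)) ≤ E[q_r(X,X')²] = L(r); that is, the variance condition Var(h_r(X,Y)) ≤ c·Λ(r)^α holds with c = 1 and α = 1. -/
open MeasureTheory

/-- The ranking rule `r(x,x') = 2·1{s(x) ≥ s(x')} - 1` induced by a scoring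
function `s`. -/
noncomputable def scoringRule {𝒳 : Type*} (s : 𝒳 → ℝ) : 𝒳 → 𝒳 → ℝ :=
  fun x x' => 2 * (if s x' ≤ s x then 1 else 0) - 1

/-- The kernel `q_r((x,y),(x',y')) = 1{(y-y')r(x,x') < 0} - 1{(y-y')r*(x,x') < 0}`. -/
noncomputable def qKer {𝒳 : Type*} (rstar r : 𝒳 → 𝒳 → ℝ) (p q : 𝒳 × ℝ) : ℝ :=
  (if (p.2 - q.2) * r p.1 q.1 < 0 then 1 else 0) -
    (if (p.2 - q.2) * rstar p.1 q.1 < 0 then 1 else 0)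

/-- The excess ranking risk `Λ(r) = L(r) - L*`. -/
noncomputable def excessRisk {𝒳 : Type*} [MeasurableSpace 𝒳]
    (μ : Measure (𝒳 × ℝ)) (rstar r : 𝒳 → 𝒳 → ℝ) : ℝ :=
  rankRisk μ r - rankRisk μ rstar

/-- `h_r(x,y) = E[q_r((x,y),(X',Y'))] - Λ(r)`. -/
noncomputable def hFun {𝒳 : Type*} [MeasurableSpace 𝒳]
    (μ : Measure (𝒳 × ℝ)) (rstar r : 𝒳 → 𝒳 → ℝ) (p : 𝒳 × ℝ) : ℝ :=
  (∫ q, qKer rstar r p q ∂μ) - excessRisk μ rstar r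

/-!
In the noise-free model the rule induced by `m` never misranks, so `L* = 0` and `q_r` is the
misranking indicator of `r`. On the graph of `m`, `h_r(x, m x) = f(x) - Λ(r)` with
`f(x) = E q_r(x, X')`, hence `Var h_r(X,Y) = Var f(X)`; as `f` takes values in `[0,1]`,
`Var f(X) ≤ E f(X)² ≤ E f(X) = E q_r(X,X') = L(r)`.
-/

open ProbabilityTheory Set

lemma integral_mem_Icc_zero_one {Ω : Type*} [MeasurableSpace Ω] {μ : Measure Ω}
    [IsProbabilityMeasure μ] {X : Ω → ℝ} (hX : ∀ ω, X ω ∈ Icc 0 1) : μ[X] ∈ Icc 0 1 :=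
  ⟨integral_nonneg fun ω => (hX ω).1, by
    simpa using integral_mono_of_nonneg (μ := μ) (.of_forall fun ω => (hX ω).1)
      (integrable_const (1 : ℝ)) (.of_forall fun ω => (hX ω).2)⟩

lemma variance_le_integral_of_mem_Icc {Ω : Type*} [MeasurableSpace Ω] {μ : Measure Ω}
    [IsProbabilityMeasure μ] {X : Ω → ℝ} (hXm : AEStronglyMeasurable X μ)
    (hX : ∀ ω, X ω ∈ Icc 0 1) : Var[X; μ] ≤ μ[X] :=
  (variance_le_expectation_sq hXm).trans <|
    integral_mono_of_nonneg (.of_forall fun ω => sq_nonneg (X ω))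
      (.of_bound hXm 1 <| .of_forall fun ω => by
        rw [Real.norm_of_nonneg (hX ω).1]; exact (hX ω).2)
      (.of_forall fun ω => by
        simpa [sq] using mul_le_of_le_one_left (hX ω).1 (hX ω).2)

section ScoringRule

variable {𝒳 : Type*}

lemma mul_scoringRule_nonneg (s : 𝒳 → ℝ) (x x' : 𝒳) :
    0 ≤ (s x - s x') * scoringRule s x x' := by
  unfold scoringRule
  split_ifs <;> nlinarith

lemma measurable_scoringRule [MeasurableSpace 𝒳] {s : 𝒳 → ℝ} (hs : Measurable s) :
    Measurable (fun p : 𝒳 × 𝒳 => scoringRule s p.1 p.2) := by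
  unfold scoringRule
  exact ((measurable_const.ite (measurableSet_le (hs.comp measurable_snd)
    (hs.comp measurable_fst)) measurable_const).const_mul 2).sub measurable_const

end ScoringRule

section Kernel

variable {𝒳 : Type*} [MeasurableSpace 𝒳]

lemma measurable_qKer {rstar r : 𝒳 → 𝒳 → ℝ}
    (hrstar : Measurable (fun p : 𝒳 × 𝒳 => rstar p.1 p.2))
    (hr : Measurable (fun p : 𝒳 × 𝒳 => r p.1 p.2)) :
    Measurable (fun pq : (𝒳 × ℝ) × (𝒳 × ℝ) => qKer rstar r pq.1 pq.2) := by
  have hpair : Measurable (fun pq : (𝒳 × ℝ) × (𝒳 × ℝ) => (pq.1.1, pq.2.1)) := by fun_prop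
  have hdiff : Measurable (fun pq : (𝒳 × ℝ) × (𝒳 × ℝ) => pq.1.2 - pq.2.2) := by fun_prop
  unfold qKer
  exact (measurable_const.ite (measurableSet_lt (hdiff.mul (hr.comp hpair)) measurable_const)
    measurable_const).sub
    (measurable_const.ite (measurableSet_lt (hdiff.mul (hrstar.comp hpair)) measurable_const)
      measurable_const)

lemma measurable_hFun {μ : Measure (𝒳 × ℝ)} [SFinite μ] {rstar r : 𝒳 → 𝒳 → ℝ}
    (hrstar : Measurable (fun p : 𝒳 × 𝒳 => rstar p.1 p.2))
    (hr : Measurable (fun p : 𝒳 × 𝒳 => r p.1 p.2)) :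
    Measurable (hFun μ rstar r) :=
  ((measurable_qKer hrstar hr).stronglyMeasurable.integral_prod_right'.sub
    stronglyMeasurable_const).measurable

end Kernel

section NoiseFree

variable {𝒳 : Type*}

noncomputable def noiseFreeKer (m : 𝒳 → ℝ) (r : 𝒳 → 𝒳 → ℝ) (x x' : 𝒳) : ℝ :=
  if (m x - m x') * r x x' < 0 then 1 else 0

lemma qKer_scoringRule_graph (m : 𝒳 → ℝ) (r : 𝒳 → 𝒳 → ℝ) (x x' : 𝒳) :
    qKer (scoringRule m) r (x, m x) (x', m x') = noiseFreeKer m r x x' := by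
  simp [qKer, noiseFreeKer, not_lt.2 (mul_scoringRule_nonneg m x x')]

lemma noiseFreeKer_scoringRule (m : 𝒳 → ℝ) (x x' : 𝒳) :
    noiseFreeKer m (scoringRule m) x x' = 0 := by
  simp [noiseFreeKer, not_lt.2 (mul_scoringRule_nonneg m x x')]

lemma noiseFreeKer_mem_Icc (m : 𝒳 → ℝ) (r : 𝒳 → 𝒳 → ℝ) (x x' : 𝒳) :
    noiseFreeKer m r x x' ∈ Icc 0 1 := by
  unfold noiseFreeKer
  split_ifs <;> simp

lemma noiseFreeKer_sq (m : 𝒳 → ℝ) (r : 𝒳 → 𝒳 → ℝ) (x x' : 𝒳) :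
    noiseFreeKer m r x x' ^ 2 = noiseFreeKer m r x x' := by
  unfold noiseFreeKer
  split_ifs <;> simp

variable [MeasurableSpace 𝒳] {m : 𝒳 → ℝ} {r : 𝒳 → 𝒳 → ℝ}

lemma measurable_noiseFreeKer (hm : Measurable m)
    (hr : Measurable (fun p : 𝒳 × 𝒳 => r p.1 p.2)) :
    Measurable (fun w : 𝒳 × 𝒳 => noiseFreeKer m r w.1 w.2) :=
  measurable_const.ite (measurableSet_lt (((hm.comp measurable_fst).sub
    (hm.comp measurable_snd)).mul hr) measurable_const) measurable_const

lemma integrable_noiseFreeKer (μ : Measure (𝒳 × 𝒳)) [IsFiniteMeasure μ] (hm : Measurable m)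
    (hr : Measurable (fun p : 𝒳 × 𝒳 => r p.1 p.2)) :
    Integrable (fun w : 𝒳 × 𝒳 => noiseFreeKer m r w.1 w.2) μ :=
  .of_bound (measurable_noiseFreeKer hm hr).aestronglyMeasurable 1 <| .of_forall fun w => by
    obtain ⟨h0, h1⟩ := noiseFreeKer_mem_Icc m r w.1 w.2
    rwa [Real.norm_of_nonneg h0]

variable (ν : Measure 𝒳)

lemma hFun_scoringRule_graph (hm : Measurable m)
    (hr : Measurable (fun p : 𝒳 × 𝒳 => r p.1 p.2)) (x : 𝒳) :
    hFun (ν.map fun x => (x, m x)) (scoringRule m) r (x, m x)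
      = (∫ x', noiseFreeKer m r x x' ∂ν)
        - excessRisk (ν.map fun x => (x, m x)) (scoringRule m) r := by
  have hG : Measurable (fun x : 𝒳 => (x, m x)) := measurable_id.prodMk hm
  have hslice : Measurable (fun p => qKer (scoringRule m) r (x, m x) p) :=
    (measurable_qKer (measurable_scoringRule hm) hr).comp measurable_prodMk_left
  unfold hFun
  rw [integral_map hG.aemeasurable hslice.aestronglyMeasurable]
  simp only [qKer_scoringRule_graph]

variable [SFinite ν]

lemma rankRisk_map_graph (hm : Measurable m) (hr : Measurable (fun p : 𝒳 × 𝒳 => r p.1 p.2)) :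
    rankRisk (ν.map fun x => (x, m x)) r = ∫ w, noiseFreeKer m r w.1 w.2 ∂(ν.prod ν) := by
  have hG : Measurable (fun x : 𝒳 => (x, m x)) := measurable_id.prodMk hm
  have hS : MeasurableSet
      {p : (𝒳 × ℝ) × (𝒳 × ℝ) | (p.1.2 - p.2.2) / 2 * r p.1.1 p.2.1 < 0} :=
    measurableSet_lt (((measurable_fst.snd.sub measurable_snd.snd).div_const 2).mul
      (hr.comp (measurable_fst.fst.prodMk measurable_snd.fst))) measurable_const
  unfold rankRisk
  rw [Measure.map_prod_map _ _ hG hG, Measure.map_apply (hG.prodMap hG) hS, ← measureReal_def,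
    ← integral_indicator_one ((hG.prodMap hG) hS)]
  congr 1 with w
  simp [noiseFreeKer, indicator_apply, div_mul_eq_mul_div, div_lt_iff₀ (two_pos : (0 : ℝ) < 2)]

lemma rankRisk_scoringRule_map_graph (hm : Measurable m) :
    rankRisk (ν.map fun x => (x, m x)) (scoringRule m) = 0 := by
  simp [rankRisk_map_graph ν hm (measurable_scoringRule hm), noiseFreeKer_scoringRule]

end NoiseFree

lemma variance_hFun_scoringRule_map_graph_le {𝒳 : Type*} [MeasurableSpace 𝒳]
    (ν : Measure 𝒳) [IsProbabilityMeasure ν] {m : 𝒳 → ℝ} (hm : Measurable m)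
    {r : 𝒳 → 𝒳 → ℝ} (hr : Measurable (fun p : 𝒳 × 𝒳 => r p.1 p.2)) :
    Var[hFun (ν.map fun x => (x, m x)) (scoringRule m) r; ν.map fun x => (x, m x)]
      ≤ ∫ w, noiseFreeKer m r w.1 w.2 ∂(ν.prod ν) := by
  set G : 𝒳 → 𝒳 × ℝ := fun x => (x, m x)
  set f : 𝒳 → ℝ := fun x => ∫ x', noiseFreeKer m r x x' ∂ν
  have hG : Measurable G := measurable_id.prodMk hm
  have hf : StronglyMeasurable f :=
    (measurable_noiseFreeKer hm hr).stronglyMeasurable.integral_prod_right'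
  have hf01 : ∀ x, f x ∈ Icc 0 1 := fun x =>
    integral_mem_Icc_zero_one (noiseFreeKer_mem_Icc m r x)
  calc Var[hFun (ν.map G) (scoringRule m) r; ν.map G]
      = Var[fun x => f x - excessRisk (ν.map G) (scoringRule m) r; ν] := by
        rw [variance_map (measurable_hFun (measurable_scoringRule hm) hr).aemeasurable
          hG.aemeasurable]
        exact congrArg (Var[·; ν]) (funext (hFun_scoringRule_graph ν hm hr))
    _ = Var[f; ν] := variance_sub_const hf.aestronglyMeasurable _
    _ ≤ ∫ x, f x ∂ν := variance_le_integral_of_mem_Icc hf.aestronglyMeasurable hf01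
    _ = ∫ w, noiseFreeKer m r w.1 w.2 ∂(ν.prod ν) :=
        (integral_prod _ (integrable_noiseFreeKer _ hm hr)).symm

/-- In the noise-free regression model `Y = m(X)`, one has `L* = 0`
(the Bayes rule being the one induced by the scoring function `m`),
`q_r(x,x') = 1{(m(x) - m(x'))·r(x,x') < 0}`, and for every ranking rule `r`,
`Var(h_r(X,Y)) ≤ E[q_r(X,X')²] = L(r)`; that is, the variance condition holds with
`c = 1` and `α = 1`. -/
theorem stmt12 {𝒳 : Type*} [MeasurableSpace 𝒳]
    (ν : Measure 𝒳) [IsProbabilityMeasure ν]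
    (m : 𝒳 → ℝ) (hm : Measurable m)
    -- the noise-free model `Y = m(X)`: the law of `(X,Y)` is the image of `ν` under
    -- `x ↦ (x, m(x))`
    (μ : Measure (𝒳 × ℝ)) (hμ : μ = ν.map (fun x => (x, m x))) :
    -- `L* = 0`, the Bayes rule being induced by the scoring function `s* = m`:
    rankRisk μ (scoringRule m) = 0 ∧
    (∀ r : 𝒳 → 𝒳 → ℝ, IsRankingRule r → rankRisk μ (scoringRule m) ≤ rankRisk μ r) ∧
    -- on the support of the model, `q_r` reduces to `1{(m(x)-m(x'))·r(x,x') < 0}`: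
    (∀ r : 𝒳 → 𝒳 → ℝ, ∀ x x' : 𝒳,
      qKer (scoringRule m) r (x, m x) (x', m x')
        = if (m x - m x') * r x x' < 0 then 1 else 0) ∧
    -- the variance condition with `c = 1`, `α = 1`:
    (∀ r : 𝒳 → 𝒳 → ℝ, IsRankingRule r →
      (∫ p, (hFun μ (scoringRule m) r p
            - ∫ q, hFun μ (scoringRule m) r q ∂μ) ^ 2 ∂μ)
        ≤ ∫ w, (if (m w.1 - m w.2) * r w.1 w.2 < 0 then (1:ℝ) else 0) ^ 2
            ∂(ν.prod ν) ∧
      (∫ w, (if (m w.1 - m w.2) * r w.1 w.2 < 0 then (1:ℝ) else 0) ^ 2 ∂(ν.prod ν))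
        = rankRisk μ r) := by
  subst hμ
  have hBayes := rankRisk_scoringRule_map_graph ν hm
  refine ⟨hBayes, fun r _ => hBayes ▸ ENNReal.toReal_nonneg, qKer_scoringRule_graph m,
    fun r hr => ?_⟩
  change _ ≤ ∫ w, noiseFreeKer m r w.1 w.2 ^ 2 ∂(ν.prod ν) ∧
    ∫ w, noiseFreeKer m r w.1 w.2 ^ 2 ∂(ν.prod ν) = _
  simp only [noiseFreeKer_sq]
  rw [← variance_eq_integral (measurable_hFun (measurable_scoringRule hm) hr.1).aemeasurable]
  exact ⟨variance_hFun_scoringRule_map_graph_le ν hm hr.1, (rankRisk_map_graph ν hm hr.1).symm⟩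
end

section
/- In the heteroscedastic Gaussian regression model Y = m(X) + σ(X)·ε, suppose m(X) has a bounded density and the conditional standard deviation σ(x) is bounded over 𝒳. Then for every α ∈ [0,1) there exists a constant c > 0 such that for all x ∈ 𝒳, E_{X'}[ |Δ(x,X')|^{−α} ] ≤ c, where Δ(x,x') = (m(x) − m(x'))/√(σ²(x) + σ²(x')). -/
/-!
Since `σ ≤ S`, the normalising factor `√(σ²(x) + σ²(x'))` is at most `√(2S²)`, so
`|Δ(x,x')|^{-α} ≤ (2S²)^{α/2} |m(x) - m(x')|^{-α}` and it suffices to bound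
`E|t - m(X')|^{-α}` uniformly in `t`. Off the unit ball around `t` the integrand is at most `1`;
on it, the law of `m(X')` is at most `B` times Lebesgue measure, and `|u|^{-α}` is integrable
near `0` because `α < 1`.
-/

open MeasureTheory Metric

lemma abs_div_rpow_neg_le {a s L α : ℝ} (hs : 0 < s) (hsL : s ≤ L) (hα : 0 ≤ α) :
    |a / s| ^ (-α) ≤ L ^ α * |a| ^ (-α) := by
  rw [abs_div, abs_of_pos hs, Real.div_rpow (abs_nonneg a) hs.le, Real.rpow_neg hs.le,
    div_inv_eq_mul, mul_comm]
  gcongr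

lemma sqrt_sq_add_sq_le {a b S : ℝ} (ha : 0 ≤ a) (hb : 0 ≤ b) (haS : a ≤ S) (hbS : b ≤ S) :
    √(a ^ 2 + b ^ 2) ≤ √(2 * S ^ 2) := by
  gcongr
  nlinarith

lemma ofReal_norm_rpow_neg_le_indicator_add_one {E : Type*} [SeminormedAddGroup E] {α : ℝ}
    (hα : 0 ≤ α) (y : E) :
    ENNReal.ofReal (‖y‖ ^ (-α)) ≤
      (closedBall 0 1).indicator (fun y => ENNReal.ofReal (‖y‖ ^ (-α))) y + 1 := by
  by_cases hy : y ∈ closedBall (0 : E) 1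
  · simp [Set.indicator_of_mem hy]
  · have hy1 : 1 ≤ ‖y‖ := by simpa using (not_le.1 (mt mem_closedBall_zero_iff.2 hy)).le
    rw [Set.indicator_of_notMem hy, zero_add, ← ENNReal.ofReal_one]
    exact ENNReal.ofReal_le_ofReal (Real.rpow_le_one_of_one_le_of_nonpos hy1 (neg_nonpos.2 hα))

lemma lintegral_closedBall_norm_rpow_neg_lt_top {E : Type*} [NormedAddCommGroup E]
    [NormedSpace ℝ E] [FiniteDimensional ℝ E] [MeasurableSpace E] [BorelSpace E] {μ : Measure E}
    [μ.IsAddHaarMeasure] (hd : 1 ≤ Module.finrank ℝ E) {α : ℝ}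
    (hα : α < Module.finrank ℝ E) :
    ∫⁻ y in closedBall 0 1, ENNReal.ofReal (‖y‖ ^ (-α)) ∂μ < ⊤ := by
  have hloc : LocallyIntegrable (fun y : E => ‖y‖ ^ (-α)) μ :=
    locallyIntegrable_of_norm_le_rpow (C := 1) hd hα
      (ae_of_all _ fun y => by simp [abs_of_nonneg (Real.rpow_nonneg (norm_nonneg y) _)])
      (measurable_norm.pow_const _).aestronglyMeasurable
  exact (hloc.integrableOn_isCompact (isCompact_closedBall 0 1)).setLIntegral_lt_top

lemma lintegral_norm_sub_rpow_neg_le {E : Type*} [SeminormedAddGroup E] [MeasurableSpace E]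
    [OpensMeasurableSpace E] [MeasurableAdd E] {μ : Measure E} [μ.IsAddRightInvariant]
    {ν : Measure E} {B : ENNReal} (hν : ν ≤ B • μ) {α : ℝ} (hα : 0 ≤ α) (x : E) :
    ∫⁻ y, ENNReal.ofReal (‖x - y‖ ^ (-α)) ∂ν ≤
      B * ∫⁻ y in closedBall 0 1, ENNReal.ofReal (‖y‖ ^ (-α)) ∂μ + ν Set.univ := by
  set g : E → ENNReal := (closedBall 0 1).indicator fun y => ENNReal.ofReal (‖y‖ ^ (-α))
  calc ∫⁻ y, ENNReal.ofReal (‖x - y‖ ^ (-α)) ∂ν ≤ ∫⁻ y, g (y - x) + 1 ∂ν :=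
        lintegral_mono fun y => by
          rw [norm_sub_rev]; exact ofReal_norm_rpow_neg_le_indicator_add_one hα (y - x)
    _ = ∫⁻ y, g (y - x) ∂ν + ν Set.univ := by
        rw [lintegral_add_right _ measurable_const, lintegral_one]
    _ ≤ ∫⁻ y, g (y - x) ∂(B • μ) + ν Set.univ := by gcongr
    _ = B * ∫⁻ y in closedBall 0 1, ENNReal.ofReal (‖y‖ ^ (-α)) ∂μ + ν Set.univ := by
        rw [lintegral_smul_measure, lintegral_sub_right_eq_self g x,
          lintegral_indicator measurableSet_closedBall, smul_eq_mul]

lemma withDensity_le_smul_of_le {X : Type*} [MeasurableSpace X] {μ : Measure X}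
    {f : X → ENNReal} {c : ENNReal} (hf : ∀ x, f x ≤ c) : μ.withDensity f ≤ c • μ :=
  (withDensity_mono (ae_of_all _ hf)).trans_eq (withDensity_const c)

theorem stmt14_general {𝒳 : Type*} [MeasurableSpace 𝒳]
    -- the law of `X`:
    (ν : Measure 𝒳) [IsProbabilityMeasure ν]
    (m σ : 𝒳 → ℝ) (hm : Measurable m) (hσpos : ∀ x, 0 < σ x)
    -- `m(X)` has a density bounded by `B`:
    (B : ℝ)
    (f : ℝ → ENNReal) (hf : ν.map m = MeasureTheory.volume.withDensity f)
    (hfB : ∀ u, f u ≤ ENNReal.ofReal B)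
    -- `σ` is bounded over `𝒳`:
    (S : ℝ) (hS : ∀ x, σ x ≤ S) :
    ∀ α : ℝ, 0 ≤ α → α < 1 → ∃ c : ℝ, 0 < c ∧ ∀ x,
      ∫ x', |(m x - m x') / Real.sqrt (σ x ^ 2 + σ x' ^ 2)| ^ (-α) ∂ν ≤ c := by
  intro α hα0 hα1
  set K := √(2 * S ^ 2) ^ α
  set C := ∫⁻ y in closedBall (0 : ℝ) 1, ENNReal.ofReal (‖y‖ ^ (-α))
  have hC : C < ⊤ := lintegral_closedBall_norm_rpow_neg_lt_top (by simp) (by simpa using hα1)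
  have hlaw : ν.map m ≤ ENNReal.ofReal B • volume := hf ▸ withDensity_le_smul_of_le hfB
  have hbound : ∀ x, ∫⁻ x', ENNReal.ofReal
      ‖|(m x - m x') / √(σ x ^ 2 + σ x' ^ 2)| ^ (-α)‖ ∂ν ≤
      ENNReal.ofReal K * (ENNReal.ofReal B * C + 1) := by
    intro x
    calc _ ≤ ∫⁻ x', ENNReal.ofReal K * ENNReal.ofReal (‖m x - m x'‖ ^ (-α)) ∂ν :=
          lintegral_mono fun x' => by
            rw [← ENNReal.ofReal_mul (by positivity), Real.norm_eq_abs, Real.norm_eq_abs,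
              abs_of_nonneg (by positivity)]
            exact ENNReal.ofReal_le_ofReal (abs_div_rpow_neg_le
              (Real.sqrt_pos.2 (by have := hσpos x; positivity))
              (sqrt_sq_add_sq_le (hσpos x).le (hσpos x').le (hS x) (hS x')) hα0)
      _ = ENNReal.ofReal K * ∫⁻ u, ENNReal.ofReal (‖m x - u‖ ^ (-α)) ∂ν.map m := by
          rw [lintegral_const_mul' _ _ ENNReal.ofReal_ne_top, lintegral_map (by fun_prop) hm]
      _ ≤ ENNReal.ofReal K * (ENNReal.ofReal B * C + 1) := by
          gcongr
          have := lintegral_norm_sub_rpow_neg_le hlaw hα0 (m x)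
          rwa [Measure.map_apply hm .univ, Set.preimage_univ, measure_univ] at this
  refine ⟨(ENNReal.ofReal K * (ENNReal.ofReal B * C + 1)).toReal + 1, by positivity, fun x => ?_⟩
  calc _ ≤ ‖∫ x', |(m x - m x') / √(σ x ^ 2 + σ x' ^ 2)| ^ (-α) ∂ν‖ := Real.le_norm_self _
    _ ≤ _ := norm_integral_le_lintegral_norm _
    _ ≤ _ := ENNReal.toReal_mono (by finiteness) (hbound x)
    _ ≤ _ := le_add_of_nonneg_right zero_le_one

/-- **Corollary 10 of the paper.** In the heteroscedastic Gaussian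
regression model `Y = m(X) + σ(X)·ε`, if `m(X)` has a bounded density and `σ` is
bounded over `𝒳`, then for every `α ∈ [0,1)` there is a constant `c > 0` such that
`E_{X'}[|Δ(x,X')|^{-α}] ≤ c` for all `x`, where
`Δ(x,x') = (m(x) - m(x'))/√(σ²(x) + σ²(x'))`. -/
theorem stmt14 {𝒳 : Type*} [MeasurableSpace 𝒳]
    -- the law of `X`:
    (ν : Measure 𝒳) [IsProbabilityMeasure ν]
    (m σ : 𝒳 → ℝ) (hm : Measurable m) (hσ : Measurable σ) (hσpos : ∀ x, 0 < σ x)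
    -- `m(X)` has a density bounded by `B`:
    (B : ℝ) (hB : 0 < B)
    (f : ℝ → ENNReal) (hf : ν.map m = MeasureTheory.volume.withDensity f)
    (hfB : ∀ u, f u ≤ ENNReal.ofReal B)
    -- `σ` is bounded over `𝒳`:
    (S : ℝ) (hS : ∀ x, σ x ≤ S) :
    ∀ α : ℝ, 0 ≤ α → α < 1 → ∃ c : ℝ, 0 < c ∧ ∀ x,
      ∫ x', |(m x - m x') / Real.sqrt (σ x ^ 2 + σ x' ^ 2)| ^ (-α) ∂ν ≤ c :=
  stmt14_general ν m σ hm hσpos B f hf hfB S hS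
end
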